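/- arXiv:2412.03057 — 8 statements merged into one kernel-verified Lean document; each statement's English description precedes it below -/
import Mathlib

section
/- For every integer n ≥ 1, the number of subsets of a given size of an n-element set is at most 2^n / √n; that is, the binomial coefficient C(n,k) ≤ 2^n / √n for all 0 ≤ k ≤ n. -/
lemma aux_cb (m : ℕ) : (2*m+1) * (Nat.centralBinom m)^2 ≤ 16^m := by
  induction m with
  | zero => simp [Nat.centralBinom]
  | succ m ih =>
    have h := Nat.succ_mul_centralBinom_succ m
    have key : (2*(m+1)+1) * (Nat.centralBinom (m+1))^2 * (m+1)^2 ≤ 16^(m+1) * (m+1)^2 := by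
      have e : (Nat.centralBinom (m+1)) * (m+1) = 2 * (2*m+1) * Nat.centralBinom m := by
        rw [mul_comm]; exact h
      calc (2*(m+1)+1) * (Nat.centralBinom (m+1))^2 * (m+1)^2
          = (2*m+3) * ((Nat.centralBinom (m+1)) * (m+1))^2 := by ring
        _ = (2*m+3) * (2*(2*m+1)*Nat.centralBinom m)^2 := by rw [e]
        _ = (2*m+3)*(2*m+1) * (4 * ((2*m+1) * (Nat.centralBinom m)^2)) := by ring
        _ ≤ (2*m+3)*(2*m+1) * (4 * 16^m) := by
            exact Nat.mul_le_mul_left _ (Nat.mul_le_mul_left _ ih)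
        _ ≤ (2*(m+1))^2 * (4 * 16^m) := by
            apply Nat.mul_le_mul_right; nlinarith
        _ = 16^(m+1) * (m+1)^2 := by ring
    exact Nat.le_of_mul_le_mul_right key (by positivity)

lemma aux_mid (n : ℕ) : n * (n.choose (n/2))^2 ≤ 4^n := by
  rcases Nat.even_or_odd n with ⟨m, hm⟩ | ⟨m, hm⟩
  · subst hm
    have h2 : (m+m)/2 = m := by omega
    rw [h2]
    have h1 := aux_cb m
    have h3 : (m+m) * (Nat.centralBinom m)^2 ≤ 16^m :=
      le_trans (by nlinarith [Nat.centralBinom_pos m]) h1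
    calc (m+m) * ((m+m).choose m)^2 = (m+m) * (Nat.centralBinom m)^2 := by
          rw [Nat.centralBinom, two_mul]
      _ ≤ 16^m := h3
      _ ≤ 4^(m+m) := by rw [← two_mul, pow_mul]; norm_num
  · subst hm
    have h2 : (2*m+1)/2 = m := by omega
    rw [h2]
    have e : (2*m+1) * Nat.centralBinom m = (2*m+1).choose (m+1) * (m+1) := by
      have := Nat.add_one_mul_choose_eq (2*m) m
      simpa [Nat.centralBinom] using this
    have esym : (2*m+1).choose (m+1) = (2*m+1).choose m := by
      rw [← Nat.choose_symm (by omega : m ≤ 2*m+1)]; congr 1; omega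
    have key : (2*m+1) * ((2*m+1).choose m)^2 * ((m+1)^2) ≤ 4^(2*m+1) * ((m+1)^2) := by
      calc (2*m+1) * ((2*m+1).choose m)^2 * ((m+1)^2)
          = (2*m+1) * ((2*m+1).choose (m+1) * (m+1))^2 := by rw [esym]; ring
        _ = (2*m+1) * ((2*m+1) * Nat.centralBinom m)^2 := by rw [e]
        _ = (2*m+1)^2 * ((2*m+1) * (Nat.centralBinom m)^2) := by ring
        _ ≤ (2*m+1)^2 * 16^m := Nat.mul_le_mul_left _ (aux_cb m)
        _ ≤ (4*(m+1)^2) * 16^m := Nat.mul_le_mul_right _ (by nlinarith)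
        _ = 4^(2*m+1) * ((m+1)^2) := by
            have p4 : (4:ℕ)^(2*m+1) = 4 * 16^m := by
              rw [pow_succ, pow_mul]; norm_num [mul_comm]
            rw [p4]; ring
    exact Nat.le_of_mul_le_mul_right key (by positivity)

/-- For every integer `n ≥ 1` and `0 ≤ k ≤ n`, the binomial coefficient
`C(n,k)` is at most `2^n / √n`. -/
theorem stmt_0 (n k : ℕ) (hn : 1 ≤ n) (hk : k ≤ n) :
    (n.choose k : ℝ) ≤ 2 ^ n / Real.sqrt n := by
  have hs : (0:ℝ) < Real.sqrt n := Real.sqrt_pos.mpr (by exact_mod_cast hn)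
  rw [le_div_iff₀ hs]
  have h1 : (n.choose k : ℝ) ≤ (n.choose (n/2) : ℝ) := by
    exact_mod_cast Nat.choose_le_middle k n
  calc (n.choose k : ℝ) * Real.sqrt n ≤ (n.choose (n/2) : ℝ) * Real.sqrt n := by
        exact mul_le_mul_of_nonneg_right h1 hs.le
    _ = Real.sqrt (n * (n.choose (n/2))^2) := by
        rw [Real.sqrt_mul (by positivity), Real.sqrt_sq (by positivity)]; ring
    _ ≤ Real.sqrt (4^n) := by
        apply Real.sqrt_le_sqrt
        exact_mod_cast aux_mid n
    _ = 2^n := by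
        rw [show ((4:ℝ))^n = (2^n)^2 by rw [← pow_mul, mul_comm, pow_mul]; norm_num]
        exact Real.sqrt_sq (by positivity)
end

section
/- The Diophantine equation C(n+k, k) = 2·C(n, k) has no positive integer solutions (n, k) other than n = k = 1. -/
set_option maxRecDepth 100000

open Nat Finset

/-! Auxiliary definitions -/

def Sprod (k m : ℕ) : ℕ := ∏ j ∈ range k, (m + k + 1 + j)
def Tprod (k m : ℕ) : ℕ := ∏ j ∈ range k, (m + 1 + j)

/-- crude primality test: passes for every prime; exact below `37^2`. -/
def smallPrime (n : ℕ) : Bool :=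
  decide (2 ≤ n) &&
    ([2,3,5,7,11,13,17,19,23,29,31].all fun d => decide (n < d*d) || !(decide (d ∣ n)))

def pB (M : ℕ) : ℕ := ((range M).filter (fun n => smallPrime n = true)).card

def PP (M : ℕ) : ℕ := ((range M).filter Nat.Prime).card

/-! Basic facts about the products -/

lemma Tpos (k m : ℕ) : 0 < Tprod k m := by
  unfold Tprod
  exact prod_pos (fun j _ => by omega)

lemma prodfact : ∀ (k a : ℕ), (∏ j ∈ range k, (a + 1 + j)) * a ! = (a + k)! := by
  intro k
  induction k with
  | zero => simp
  | succ k ih =>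
    intro a
    have h0 : (∏ j ∈ range (k+1), (a + 1 + j))
        = (∏ j ∈ range k, (a + 1 + (j+1))) * (a + 1 + 0) := prod_range_succ' _ k
    have h1 : (∏ j ∈ range k, (a + 1 + (j+1))) = (∏ j ∈ range k, ((a+1) + 1 + j)) := by
      apply prod_congr rfl; intro j _; omega
    calc (∏ j ∈ range (k+1), (a + 1 + j)) * a !
        = (∏ j ∈ range k, ((a+1) + 1 + j)) * ((a + 1) * a !) := by
          rw [h0, h1]; ring
      _ = (∏ j ∈ range k, ((a+1) + 1 + j)) * (a+1)! := by rw [Nat.factorial_succ]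
      _ = ((a + 1) + k)! := ih (a+1)
      _ = (a + (k+1))! := by ring_nf

lemma Sfact (k m : ℕ) : Sprod k m = k ! * ((m + 2*k).choose k) := by
  have h1 : Sprod k m * (m + k)! = (m + 2*k)! := by
    have h := prodfact k (m + k)
    unfold Sprod
    calc (∏ j ∈ range k, (m + k + 1 + j)) * (m+k)! = ((m+k) + k)! := h
      _ = (m + 2*k)! := by ring_nf
  have h2 : (m + 2*k).choose k * k ! * ((m + 2*k) - k)! = (m + 2*k)! :=
    Nat.choose_mul_factorial_mul_factorial (by omega)
  have h3 : (m + 2*k) - k = m + k := by omega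
  rw [h3] at h2
  have h4 : Sprod k m * (m + k)! = (k ! * ((m + 2*k).choose k)) * (m + k)! := by
    rw [h1, ← h2]; ring
  exact Nat.eq_of_mul_eq_mul_right (Nat.factorial_pos _) h4

lemma Tfact (k m : ℕ) : Tprod k m = k ! * ((m + k).choose k) := by
  have h1 : Tprod k m * m ! = (m + k)! := prodfact k m
  have h2 : (m + k).choose k * k ! * ((m + k) - k)! = (m + k)! :=
    Nat.choose_mul_factorial_mul_factorial (by omega)
  have h3 : (m + k) - k = m := by omega
  rw [h3] at h2
  have h4 : Tprod k m * m ! = (k ! * ((m + k).choose k)) * m ! := by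
    rw [h1, ← h2]; ring
  exact Nat.eq_of_mul_eq_mul_right (Nat.factorial_pos _) h4

/-! Monotone bracketing for small `k` -/

lemma Sstep (k m : ℕ) : Sprod k (m+1) * Tprod k m ≤ Sprod k m * Tprod k (m+1) := by
  unfold Sprod Tprod
  rw [← prod_mul_distrib, ← prod_mul_distrib]
  apply prod_le_prod'
  intro j _
  nlinarith [sq_nonneg (m+j)]

lemma Smono (k m : ℕ) : ∀ t, Sprod k (m+t) * Tprod k m ≤ Sprod k m * Tprod k (m+t) := by
  intro t
  induction t with
  | zero => simp [Nat.mul_comm]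
  | succ t ih =>
    have h1 := Sstep k (m+t)
    have key : Sprod k (m+(t+1)) * Tprod k m * Tprod k (m+t)
        ≤ Sprod k m * Tprod k (m+(t+1)) * Tprod k (m+t) := by
      calc Sprod k (m+(t+1)) * Tprod k m * Tprod k (m+t)
          = (Sprod k (m+t+1) * Tprod k (m+t)) * Tprod k m := by ring_nf
        _ ≤ (Sprod k (m+t) * Tprod k (m+t+1)) * Tprod k m := mul_le_mul_left h1 _
        _ = (Sprod k (m+t) * Tprod k m) * Tprod k (m+t+1) := by ring
        _ ≤ (Sprod k m * Tprod k (m+t)) * Tprod k (m+t+1) := mul_le_mul_left ih _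
        _ = Sprod k m * Tprod k (m+(t+1)) * Tprod k (m+t) := by ring_nf
    exact Nat.le_of_mul_le_mul_right key (Tpos k (m+t))

lemma bracket (k m₀ : ℕ) (h1 : 2 * Tprod k m₀ < Sprod k m₀)
    (h2 : Sprod k (m₀+1) < 2 * Tprod k (m₀+1)) :
    ∀ m, Sprod k m ≠ 2 * Tprod k m := by
  intro m heq
  rcases le_or_gt m m₀ with hle | hlt
  · obtain ⟨t, rfl⟩ : ∃ t, m₀ = m + t := ⟨m₀ - m, by omega⟩
    have hmono := Smono k m t
    rw [heq] at hmono
    have hB : 2 * Tprod k (m+t) * Tprod k m < Sprod k (m+t) * Tprod k m :=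
      mul_lt_mul_of_pos_right h1 (Tpos k m)
    have hcomm : 2 * Tprod k (m+t) * Tprod k m = 2 * Tprod k m * Tprod k (m+t) := by ring
    linarith
  · obtain ⟨t, rfl⟩ : ∃ t, m = (m₀+1) + t := ⟨m - m₀ - 1, by omega⟩
    have hmono := Smono k (m₀+1) t
    rw [heq] at hmono
    have hlt2 : Sprod k (m₀+1) * Tprod k (m₀+1+t) < 2 * Tprod k (m₀+1) * Tprod k (m₀+1+t) :=
      mul_lt_mul_of_pos_right h2 (Tpos _ _)
    have hcomm : 2 * Tprod k (m₀+1+t) * Tprod k (m₀+1)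
        = 2 * Tprod k (m₀+1) * Tprod k (m₀+1+t) := by ring
    linarith

/-! Bernoulli-type inequalities -/

lemma bern_low : ∀ (e a c : ℕ), a^(e+1) ≤ (a - c)^(e+1) + (e+1) * c * a^e := by
  intro e
  induction e with
  | zero =>
    intro a c
    have : a ≤ (a - c) + c := by omega
    simpa using this
  | succ e ih =>
    intro a c
    have h2 : a * a^(e+1) ≤ a * ((a-c)^(e+1) + (e+1) * c * a^e) :=
      mul_le_mul_right (ih a c) a
    have h3 : a * (a-c)^(e+1) ≤ (a-c) * (a-c)^(e+1) + c * (a-c)^(e+1) := by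
      have ha : a ≤ (a - c) + c := by omega
      calc a * (a-c)^(e+1) ≤ ((a-c)+c) * (a-c)^(e+1) := mul_le_mul_left ha _
        _ = (a-c) * (a-c)^(e+1) + c * (a-c)^(e+1) := by ring
    have h4 : (a-c)^(e+1) ≤ a^(e+1) := Nat.pow_le_pow_left (by omega) _
    have h5 : c * (a-c)^(e+1) ≤ c * a^(e+1) := mul_le_mul_right h4 c
    have h6 : a * ((a-c)^(e+1) + (e+1) * c * a^e)
        = a * (a-c)^(e+1) + (e+1) * c * a^(e+1) := by ring
    have h7 : (a-c) * (a-c)^(e+1) = (a-c)^(e+2) := by ring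
    calc a^(e+2) = a * a^(e+1) := by ring
      _ ≤ a * (a-c)^(e+1) + (e+1) * c * a^(e+1) := by rw [h6] at h2; exact h2
      _ ≤ ((a-c)^(e+2) + c * a^(e+1)) + (e+1) * c * a^(e+1) := by
          have := le_trans h3 (by omega : (a-c) * (a-c)^(e+1) + c * (a-c)^(e+1)
            ≤ (a-c) * (a-c)^(e+1) + c * a^(e+1))
          rw [h7] at this
          omega
      _ = (a-c)^(e+2) + (e+2) * c * a^(e+1) := by ring

lemma bern_up : ∀ (e a c : ℕ), a^(e+1) + (e+1) * c * a^e ≤ (a+c)^(e+1) := by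
  intro e
  induction e with
  | zero =>
    intro a c
    simpa using by omega
  | succ e ih =>
    intro a c
    have h2 : (a+c) * (a^(e+1) + (e+1) * c * a^e) ≤ (a+c) * (a+c)^(e+1) :=
      mul_le_mul_right (ih a c) _
    have expand : (a+c) * (a^(e+1) + (e+1) * c * a^e)
        = (a^(e+2) + (e+2) * c * a^(e+1)) + (e+1) * c * c * a^e := by ring
    have h3 : (a+c) * (a+c)^(e+1) = (a+c)^(e+2) := by ring
    rw [expand, h3] at h2
    show a^(e+2) + (e+2) * c * a^(e+1) ≤ (a+c)^(e+2)
    omega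

lemma fact2pow' : ∀ (l : ℕ), (l+1)! * 2^l ≤ (l+1)^(l+1) := by
  intro l
  induction l with
  | zero => simp
  | succ l ih =>
    have h1 : 2 * (l+1)^(l+1) ≤ (l+2)^(l+1) := by
      have h := bern_up l (l+1) 1
      have he : (l+1)^(l+1) + (l+1) * 1 * (l+1)^l = 2 * (l+1)^(l+1) := by ring
      rw [he] at h
      have he2 : (l+1) + 1 = l + 2 := by ring
      rw [he2] at h
      exact h
    calc (l+2)! * 2^(l+1) = (l+2) * 2 * ((l+1)! * 2^l) := by
          rw [Nat.factorial_succ]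
          ring
      _ ≤ (l+2) * 2 * (l+1)^(l+1) := mul_le_mul_right ih _
      _ = (l+2) * (2 * (l+1)^(l+1)) := by ring
      _ ≤ (l+2) * (l+2)^(l+1) := mul_le_mul_right h1 _
      _ = (l+2)^(l+2) := by ring

lemma fact2pow : ∀ (k : ℕ), k ! * 2^(k-1) ≤ k^k := by
  intro k
  rcases k with _ | l
  · simp
  · have h := fact2pow' l
    have he : (l+1) - 1 = l := by omega
    rw [he]
    exact h

/-! Window bounds for a putative solution -/

section window

variable {k m : ℕ}

lemma lower_bound (hk : 2 ≤ k) (key : Sprod k m = 2 * Tprod k m) : k^2 ≤ m + k := by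
  have hc1 : (m + 2*k)^k = ∏ _j ∈ range k, (m + 2*k) := by rw [prod_const, card_range]
  have hc2 : (m + k)^k = ∏ _j ∈ range k, (m + k) := by rw [prod_const, card_range]
  have hcomp : Tprod k m * (m + 2*k)^k ≤ Sprod k m * (m + k)^k := by
    unfold Sprod Tprod
    rw [hc1, hc2, ← prod_mul_distrib, ← prod_mul_distrib]
    apply prod_le_prod'
    intro j hj
    have hjk : j + 1 ≤ k := mem_range.mp hj
    obtain ⟨c, rfl⟩ : ∃ c, k = j + 1 + c := ⟨k - (j+1), by omega⟩
    nlinarith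
  rw [key] at hcomp
  have hT := Tpos k m
  have h1 : (m + 2*k)^k ≤ 2 * (m + k)^k := by
    rw [show 2 * Tprod k m * (m + k)^k = Tprod k m * (2 * (m+k)^k) by ring] at hcomp
    exact Nat.le_of_mul_le_mul_left hcomp hT
  obtain ⟨l, hl⟩ : ∃ l, k = l + 1 := ⟨k - 1, by omega⟩
  have h3 : (m+k)^k + k * k * (m+k)^l ≤ (m + 2*k)^k := by
    have h := bern_up l (m+k) k
    calc (m+k)^k + k * k * (m+k)^l = (m+k)^(l+1) + (l+1) * k * (m+k)^l := by rw [← hl]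
      _ ≤ ((m+k) + k)^(l+1) := h
      _ = (m + 2*k)^k := by rw [← hl]; ring_nf
  have h4 : k * k * (m+k)^l ≤ (m+k)^k := by omega
  have h5 : (m+k)^k = (m+k) * (m+k)^l := by rw [hl]; ring
  rw [h5] at h4
  have h6 : 0 < (m+k)^l := pow_pos (by omega) _
  have h7 : k * k ≤ m + k := Nat.le_of_mul_le_mul_right h4 h6
  calc k^2 = k * k := by ring
    _ ≤ m + k := h7

lemma upper_bound (hk : 2 ≤ k) (key : Sprod k m = 2 * Tprod k m)
    (hlow : k^2 ≤ m + k) : m + 2 ≤ 2 * k^2 := by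
  by_contra hq
  push_neg at hq
  set q := m + 1 with hqdef
  have hq2 : 2 * k^2 ≤ q := by omega
  have hkq : k ≤ q := by nlinarith
  obtain ⟨d, hd⟩ : ∃ d, q = d + k := ⟨q - k, by omega⟩
  have hc1 : q^k = ∏ _j ∈ range k, q := by rw [prod_const, card_range]
  have hc2 : (q + k)^k = ∏ _j ∈ range k, (q + k) := by rw [prod_const, card_range]
  have hcomp : Sprod k m * q^k ≤ Tprod k m * (q + k)^k := by
    unfold Sprod Tprod
    rw [hc1, hc2, ← prod_mul_distrib, ← prod_mul_distrib]
    apply prod_le_prod'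
    intro j _
    have h1 : m + k + 1 + j = q + k + j := by omega
    have h2 : m + 1 + j = q + j := by omega
    rw [h1, h2]
    nlinarith
  rw [key] at hcomp
  have hT := Tpos k m
  have h1 : 2 * q^k ≤ (q + k)^k := by
    rw [show 2 * Tprod k m * q^k = Tprod k m * (2 * q^k) by ring] at hcomp
    exact Nat.le_of_mul_le_mul_left hcomp hT
  obtain ⟨l, hl⟩ : ∃ l, k = l + 1 := ⟨k - 1, by omega⟩
  have h2 : q^k ≤ d^k + k * k * q^l := by
    have h := bern_low l q k
    have hqk : q - k = d := by omega
    rw [hqk] at h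
    calc q^k = q^(l+1) := by rw [← hl]
      _ ≤ d^(l+1) + (l+1) * k * q^l := h
      _ = d^k + k * k * q^l := by rw [← hl]
  have h3 : 2 * (k * k * q^l) ≤ q^k := by
    have hqq : 2 * (k*k) ≤ q := by nlinarith
    calc 2 * (k * k * q^l) = (2 * (k*k)) * q^l := by ring
      _ ≤ q * q^l := mul_le_mul_left hqq _
      _ = q^k := by rw [hl]; ring
  have h4 : q^k ≤ 2 * d^k := by omega
  have h5 : 2 * (q^k * q^k) ≤ 2 * ((d + 2*k) * d)^k := by
    calc 2 * (q^k * q^k) = (2 * q^k) * q^k := by ring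
      _ ≤ (q+k)^k * (2 * d^k) := Nat.mul_le_mul h1 h4
      _ = 2 * ((q+k)^k * d^k) := by ring
      _ = 2 * ((q+k) * d)^k := by rw [← mul_pow]
      _ = 2 * ((d + 2*k) * d)^k := by rw [hd]; ring_nf
  have h6 : ((d + 2*k) * d)^k < (q * q)^k := by
    apply Nat.pow_lt_pow_left _ (by omega)
    rw [hd]
    nlinarith
  have h7 : q^k * q^k = (q*q)^k := by rw [← mul_pow]
  omega

lemma smooth (hk : 2 ≤ k) (key : Sprod k m = 2 * Tprod k m)
    {p : ℕ} (hp : p.Prime) (hpd : p ∣ (m + 2*k).choose k) : p ≤ 2*k := by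
  by_contra hgt
  push_neg at hgt
  have hpS : p ∣ Sprod k m := by
    rw [Sfact]
    exact hpd.mul_left _
  obtain ⟨j, hj, hjd⟩ : ∃ j ∈ range k, p ∣ (m + k + 1 + j) := by
    unfold Sprod at hpS
    exact hp.prime.exists_mem_finset_dvd hpS
  have hpT : p ∣ Tprod k m := by
    have h2 : p ∣ 2 * Tprod k m := key ▸ hpS
    rcases (Nat.Prime.dvd_mul hp).mp h2 with h | h
    · have := Nat.le_of_dvd (by norm_num) h
      omega
    · exact h
  obtain ⟨j', hj', hjd'⟩ : ∃ j' ∈ range k, p ∣ (m + 1 + j') := by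
    unfold Tprod at hpT
    exact hp.prime.exists_mem_finset_dvd hpT
  have hjk := mem_range.mp hj
  have hjk' := mem_range.mp hj'
  have hsub : p ∣ (m + k + 1 + j) - (m + 1 + j') := Nat.dvd_sub hjd hjd'
  have hval : (m + k + 1 + j) - (m + 1 + j') = k + j - j' := by omega
  rw [hval] at hsub
  have hpos : 0 < k + j - j' := by omega
  have := Nat.le_of_dvd hpos hsub
  omega

lemma choose_upper (hk : 2 ≤ k) (key : Sprod k m = 2 * Tprod k m)
    (hup : m + 2 ≤ 2 * k^2) :
    (m + 2*k).choose k ≤ (2*k*(k+1))^(PP (2*k+1)) := by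
  set C := (m + 2*k).choose k with hCdef
  have hC0 : C ≠ 0 := Nat.pos_iff_ne_zero.mp (Nat.choose_pos (by omega))
  have hsupp : C.factorization.support ⊆ (range (2*k+1)).filter Nat.Prime := by
    intro p hp
    rw [Nat.support_factorization] at hp
    have hprime := Nat.prime_of_mem_primeFactors hp
    have hdvd := Nat.dvd_of_mem_primeFactors hp
    refine mem_filter.mpr ⟨mem_range.mpr ?_, hprime⟩
    have := smooth hk key hprime hdvd
    omega
  have hbase : m + 2*k ≤ 2*k*(k+1) := by nlinarith
  calc C = C.factorization.prod (· ^ ·) := (Nat.factorization_prod_pow_eq_self hC0).symm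
    _ = ∏ p ∈ C.factorization.support, p ^ C.factorization p := rfl
    _ ≤ ∏ _p ∈ C.factorization.support, (m + 2*k) := by
        apply prod_le_prod'
        intro p _
        exact Nat.pow_factorization_choose_le (by omega)
    _ = (m + 2*k) ^ C.factorization.support.card := prod_const _
    _ ≤ (2*k*(k+1)) ^ C.factorization.support.card := Nat.pow_le_pow_left hbase _
    _ ≤ (2*k*(k+1)) ^ PP (2*k+1) := by
        apply Nat.pow_le_pow_right (by nlinarith)
        exact card_le_card hsupp

lemma choose_lower (hk : 2 ≤ k) (key : Sprod k m = 2 * Tprod k m)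
    (hlow : k^2 ≤ m + k) :
    k^k * 2^(k-1) ≤ (m + 2*k).choose k := by
  have hS_lower : (k^2 + 1)^k ≤ Sprod k m := by
    unfold Sprod
    calc (k^2+1)^k = (k^2+1)^(range k).card := by rw [card_range]
      _ ≤ ∏ j ∈ range k, (m + k + 1 + j) := by
        apply pow_card_le_prod
        intro j _
        omega
  have hkk : (k^k * k^k) ≤ (k^2+1)^k := by
    calc k^k * k^k = (k^2)^k := by rw [← mul_pow]; ring_nf
      _ ≤ (k^2+1)^k := Nat.pow_le_pow_left (by omega) _
  have hS : Sprod k m = k ! * ((m + 2*k).choose k) := Sfact k m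
  have hstep : k^k * (k^k * 2^(k-1)) ≤ k^k * ((m + 2*k).choose k) := by
    calc k^k * (k^k * 2^(k-1)) = (k^k * k^k) * 2^(k-1) := by ring
      _ ≤ (k^2+1)^k * 2^(k-1) := mul_le_mul_left hkk _
      _ ≤ Sprod k m * 2^(k-1) := mul_le_mul_left hS_lower _
      _ = (k ! * 2^(k-1)) * ((m + 2*k).choose k) := by rw [hS]; ring
      _ ≤ k^k * ((m + 2*k).choose k) := mul_le_mul_left (fact2pow k) _
  exact Nat.le_of_mul_le_mul_left hstep (pow_pos (by omega) _)

end window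

/-! Prime counting bounds -/

lemma smallPrime_of_prime {p : ℕ} (hp : p.Prime) : smallPrime p = true := by
  have h2 := hp.two_le
  unfold smallPrime
  rw [Bool.and_eq_true, List.all_eq_true]
  refine ⟨decide_eq_true h2, ?_⟩
  intro d hd
  rw [Bool.or_eq_true]
  by_cases hdvd : d ∣ p
  · left
    apply decide_eq_true
    have hd2 : 2 ≤ d := by
      simp only [List.mem_cons, List.not_mem_nil, or_false] at hd
      rcases hd with rfl|rfl|rfl|rfl|rfl|rfl|rfl|rfl|rfl|rfl|rfl <;> omega
    rcases hp.eq_one_or_self_of_dvd d hdvd with h1 | h1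
    · omega
    · subst h1
      nlinarith
  · right
    simp [hdvd]

lemma PP_le_pB (M : ℕ) : PP M ≤ pB M := by
  apply card_le_card
  intro x hx
  rw [mem_filter] at hx ⊢
  exact ⟨hx.1, smallPrime_of_prime hx.2⟩

lemma PP_mono {M M' : ℕ} (h : M ≤ M') : PP M ≤ PP M' := by
  apply card_le_card
  exact filter_subset_filter _ (range_subset_range.mpr h)

lemma prime_block (a : ℕ) (ha : 8 ≤ a) : PP (a + 210) ≤ PP a + 48 := by
  unfold PP
  have hsplit : range (a+210) = range a ∪ Ico a (a+210) := by
    rw [range_eq_Ico, range_eq_Ico]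
    exact (Finset.Ico_union_Ico_eq_Ico (by omega) (by omega)).symm
  rw [hsplit, filter_union]
  refine le_trans (card_union_le _ _) ?_
  have h48 : ((Ico a (a+210)).filter Nat.Prime).card ≤ 48 := by
    have hR : ((range 210).filter
        (fun r => r % 2 ≠ 0 ∧ r % 3 ≠ 0 ∧ r % 5 ≠ 0 ∧ r % 7 ≠ 0)).card = 48 := by decide
    rw [← hR]
    apply card_le_card_of_injOn (fun p => p % 210)
    · intro p hp
      rw [mem_coe, mem_filter, mem_Ico] at hp
      obtain ⟨⟨hpa, _⟩, hpP⟩ := hp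
      have hnd : ∀ d : ℕ, 2 ≤ d → d ≤ 7 → ¬ d ∣ p := by
        intro d hdl hdu hdvd
        rcases hpP.eq_one_or_self_of_dvd d hdvd with h1 | h1
        · omega
        · omega
      have h2 := hnd 2 (by norm_num) (by norm_num)
      have h3 := hnd 3 (by norm_num) (by norm_num)
      have h5 := hnd 5 (by norm_num) (by norm_num)
      have h7 := hnd 7 (by norm_num) (by norm_num)
      rw [Nat.dvd_iff_mod_eq_zero] at h2 h3 h5 h7
      rw [mem_coe, mem_filter, mem_range]
      refine ⟨Nat.mod_lt _ (by norm_num), ?_, ?_, ?_, ?_⟩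
      · rw [Nat.mod_mod_of_dvd p (by norm_num : (2:ℕ) ∣ 210)]; omega
      · rw [Nat.mod_mod_of_dvd p (by norm_num : (3:ℕ) ∣ 210)]; omega
      · rw [Nat.mod_mod_of_dvd p (by norm_num : (5:ℕ) ∣ 210)]; omega
      · rw [Nat.mod_mod_of_dvd p (by norm_num : (7:ℕ) ∣ 210)]; omega
    · intro x hx y hy hxy
      simp only [mem_coe, mem_filter, mem_Ico] at hx hy
      simp only at hxy
      omega
  omega

lemma chunk : ∀ t, PP (1050 + 210*t) ≤ 176 + 48*t := by
  intro t
  induction t with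
  | zero =>
    have h1 : PP 1050 ≤ pB 1050 := PP_le_pB 1050
    have h2 : pB 1050 = 176 := by decide
    simpa [h2] using h1
  | succ t ih =>
    have h1 : 1050 + 210*(t+1) = (1050 + 210*t) + 210 := by ring
    rw [h1]
    have := prime_block (1050 + 210*t) (by omega)
    omega

/-! The master counting criterion -/

lemma Bmono {a k : ℕ} (ha : 1 ≤ a) (h : a ≤ k) : a^a * 2^(a-1) ≤ k^k * 2^(k-1) := by
  apply Nat.mul_le_mul
  · calc a^a ≤ k^a := Nat.pow_le_pow_left h _
      _ ≤ k^k := Nat.pow_le_pow_right (by omega) h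
  · exact Nat.pow_le_pow_right (by norm_num) (by omega)

lemma blockLem (a b k : ℕ) (ha : 1 ≤ a) (h1 : a ≤ k) (h2 : k ≤ b)
    (hnum : (2*b*(b+1))^(pB (2*b+1)) < a^a * 2^(a-1)) :
    (2*k*(k+1))^(PP (2*k+1)) < k^k * 2^(k-1) := by
  have e1 : PP (2*k+1) ≤ pB (2*b+1) :=
    le_trans (PP_mono (by omega)) (PP_le_pB _)
  calc (2*k*(k+1))^(PP (2*k+1)) ≤ (2*b*(b+1))^(PP (2*k+1)) :=
        Nat.pow_le_pow_left (by nlinarith) _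
    _ ≤ (2*b*(b+1))^(pB (2*b+1)) := Nat.pow_le_pow_right (by nlinarith) e1
    _ < a^a * 2^(a-1) := hnum
    _ ≤ k^k * 2^(k-1) := Bmono ha h1

lemma crit_tail {k : ℕ} (hk : 525 ≤ k) :
    (2*k*(k+1))^(PP (2*k+1)) < k^k * 2^(k-1) := by
  set t := (2*k - 840) / 210 with ht
  have hcov : 2*k + 1 ≤ 1050 + 210 * t := by omega
  have hPP : PP (2*k+1) ≤ 176 + 48*t := le_trans (PP_mono hcov) (chunk t)
  set E := 16*k - 552 with hE
  have hexp : (176 + 48*t) * 35 ≤ E := by omega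
  have ha1 : 1 ≤ 2*k*(k+1) := by nlinarith
  have ha4 : 2*k*(k+1) ≤ 4*k^2 := by nlinarith
  have hA35 : ((2*k*(k+1))^(176 + 48*t))^35 ≤ 2^(2*E) * k^(2*E) := by
    calc ((2*k*(k+1))^(176 + 48*t))^35 = (2*k*(k+1))^((176 + 48*t)*35) :=
          (pow_mul _ _ 35).symm
      _ ≤ (2*k*(k+1))^E := Nat.pow_le_pow_right ha1 hexp
      _ ≤ (4*k^2)^E := Nat.pow_le_pow_left ha4 _
      _ = (2^2 * k^2)^E := by norm_num
      _ = 2^(2*E) * k^(2*E) := by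
          rw [mul_pow, ← pow_mul, ← pow_mul]
  have hB35 : (k^k * 2^(k-1))^35 = k^(k*35) * 2^((k-1)*35) := by
    rw [mul_pow, ← pow_mul, ← pow_mul]
  have hlt : 2^(2*E) * k^(2*E) < k^(k*35) * 2^((k-1)*35) := by
    have e1 : 2*E < (k-1)*35 := by omega
    have e2 : 2*E ≤ k*35 := by omega
    calc 2^(2*E) * k^(2*E) ≤ 2^(2*E) * k^(k*35) :=
          mul_le_mul_right (Nat.pow_le_pow_right (by omega) e2) _
      _ < 2^((k-1)*35) * k^(k*35) := by
          apply mul_lt_mul_of_pos_right _ (pow_pos (by omega) _)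
          exact Nat.pow_lt_pow_right (by norm_num) e1
      _ = k^(k*35) * 2^((k-1)*35) := by ring
  have hfin : ((2*k*(k+1))^(176 + 48*t))^35 < (k^k * 2^(k-1))^35 := by
    rw [hB35]
    exact lt_of_le_of_lt hA35 hlt
  have hAB : (2*k*(k+1))^(176 + 48*t) < k^k * 2^(k-1) :=
    lt_of_pow_lt_pow_left₀ 35 (Nat.zero_le _) hfin
  calc (2*k*(k+1))^(PP (2*k+1)) ≤ (2*k*(k+1))^(176 + 48*t) :=
        Nat.pow_le_pow_right ha1 hPP
    _ < k^k * 2^(k-1) := hAB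

lemma criterion {k : ℕ} (hk : 48 ≤ k) :
    (2*k*(k+1))^(PP (2*k+1)) < k^k * 2^(k-1) := by
  rcases le_or_gt 525 k with h | h
  · exact crit_tail h
  have hk524 : k ≤ 524 := by omega
  rcases le_or_gt k 50 with h | h
  · exact blockLem 48 50 k (by norm_num) (by omega) h (by decide)
  rcases le_or_gt k 53 with h | h
  · exact blockLem 51 53 k (by norm_num) (by omega) h (by decide)
  rcases le_or_gt k 54 with h | h
  · exact blockLem 54 54 k (by norm_num) (by omega) h (by decide)
  rcases le_or_gt k 56 with h | h
  · exact blockLem 55 56 k (by norm_num) (by omega) h (by decide)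
  rcases le_or_gt k 62 with h | h
  · exact blockLem 57 62 k (by norm_num) (by omega) h (by decide)
  rcases le_or_gt k 69 with h | h
  · exact blockLem 63 69 k (by norm_num) (by omega) h (by decide)
  rcases le_or_gt k 78 with h | h
  · exact blockLem 70 78 k (by norm_num) (by omega) h (by decide)
  rcases le_or_gt k 90 with h | h
  · exact blockLem 79 90 k (by norm_num) (by omega) h (by decide)
  rcases le_or_gt k 107 with h | h
  · exact blockLem 91 107 k (by norm_num) (by omega) h (by decide)
  rcases le_or_gt k 131 with h | h
  · exact blockLem 108 131 k (by norm_num) (by omega) h (by decide)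
  rcases le_or_gt k 168 with h | h
  · exact blockLem 132 168 k (by norm_num) (by omega) h (by decide)
  rcases le_or_gt k 221 with h | h
  · exact blockLem 169 221 k (by norm_num) (by omega) h (by decide)
  rcases le_or_gt k 306 with h | h
  · exact blockLem 222 306 k (by norm_num) (by omega) h (by decide)
  rcases le_or_gt k 441 with h | h
  · exact blockLem 307 441 k (by norm_num) (by omega) h (by decide)
  exact blockLem 442 524 k (by norm_num) (by omega) (by omega) (by decide)

/-! Main theorem -/

/-- The equation `C(n+k, k) = 2 C(n, k)` has no positive integer solutions
other than `n = k = 1`. -/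
theorem stmt_1 (n k : ℕ) (hn : 0 < n) (hk : 0 < k)
    (h : (n + k).choose k = 2 * n.choose k) : n = 1 ∧ k = 1 := by
  have hkn : k ≤ n := by
    by_contra hlt
    push_neg at hlt
    rw [Nat.choose_eq_zero_of_lt hlt, mul_zero] at h
    exact absurd h (Nat.pos_iff_ne_zero.mp (Nat.choose_pos (by omega)))
  obtain ⟨m, rfl⟩ : ∃ m, n = m + k := ⟨n - k, by omega⟩
  have h' : (m + 2*k).choose k = 2 * ((m + k).choose k) := by
    rw [show m + 2*k = m + k + k by ring]
    exact h
  have key : Sprod k m = 2 * Tprod k m := by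
    rw [Sfact, Tfact, h']
    ring
  rcases Nat.lt_or_ge k 2 with hk2 | hk2
  · have hk1 : k = 1 := by omega
    subst hk1
    rw [show m + 1 + 1 = m + 2 by ring] at h
    rw [Nat.choose_one_right, Nat.choose_one_right] at h
    exact ⟨by omega, rfl⟩
  exfalso
  rcases Nat.lt_or_ge k 48 with hk48 | hk48
  · interval_cases k
    · exact bracket 2 3 (by decide) (by decide) m key
    · exact bracket 3 9 (by decide) (by decide) m key
    · exact bracket 4 18 (by decide) (by decide) m key
    · exact bracket 5 30 (by decide) (by decide) m key
    · exact bracket 6 45 (by decide) (by decide) m key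
    · exact bracket 7 63 (by decide) (by decide) m key
    · exact bracket 8 83 (by decide) (by decide) m key
    · exact bracket 9 107 (by decide) (by decide) m key
    · exact bracket 10 133 (by decide) (by decide) m key
    · exact bracket 11 163 (by decide) (by decide) m key
    · exact bracket 12 195 (by decide) (by decide) m key
    · exact bracket 13 230 (by decide) (by decide) m key
    · exact bracket 14 268 (by decide) (by decide) m key
    · exact bracket 15 309 (by decide) (by decide) m key
    · exact bracket 16 352 (by decide) (by decide) m key
    · exact bracket 17 399 (by decide) (by decide) m key
    · exact bracket 18 449 (by decide) (by decide) m key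
    · exact bracket 19 501 (by decide) (by decide) m key
    · exact bracket 20 556 (by decide) (by decide) m key
    · exact bracket 21 614 (by decide) (by decide) m key
    · exact bracket 22 675 (by decide) (by decide) m key
    · exact bracket 23 739 (by decide) (by decide) m key
    · exact bracket 24 806 (by decide) (by decide) m key
    · exact bracket 25 876 (by decide) (by decide) m key
    · exact bracket 26 948 (by decide) (by decide) m key
    · exact bracket 27 1024 (by decide) (by decide) m key
    · exact bracket 28 1102 (by decide) (by decide) m key
    · exact bracket 29 1183 (by decide) (by decide) m key
    · exact bracket 30 1268 (by decide) (by decide) m key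
    · exact bracket 31 1355 (by decide) (by decide) m key
    · exact bracket 32 1444 (by decide) (by decide) m key
    · exact bracket 33 1537 (by decide) (by decide) m key
    · exact bracket 34 1633 (by decide) (by decide) m key
    · exact bracket 35 1731 (by decide) (by decide) m key
    · exact bracket 36 1833 (by decide) (by decide) m key
    · exact bracket 37 1937 (by decide) (by decide) m key
    · exact bracket 38 2044 (by decide) (by decide) m key
    · exact bracket 39 2154 (by decide) (by decide) m key
    · exact bracket 40 2267 (by decide) (by decide) m key
    · exact bracket 41 2383 (by decide) (by decide) m key
    · exact bracket 42 2502 (by decide) (by decide) m key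
    · exact bracket 43 2624 (by decide) (by decide) m key
    · exact bracket 44 2748 (by decide) (by decide) m key
    · exact bracket 45 2876 (by decide) (by decide) m key
    · exact bracket 46 3006 (by decide) (by decide) m key
    · exact bracket 47 3139 (by decide) (by decide) m key
  · have hlow := lower_bound hk2 key
    have hup := upper_bound hk2 key hlow
    have hlower := choose_lower hk2 key hlow
    have hupper := choose_upper hk2 key hup
    have hcrit := criterion hk48
    exact lt_irrefl _ (lt_of_le_of_lt (le_trans hlower hupper) hcrit)
end

section
/- Let a, b, x, y be positive integers with ab = xy and a > x > y. Then (a!)^b · b! > (x!)^y · y!. -/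
lemma aux_fac_le_pow : ∀ n : ℕ, (n+1).factorial ≤ (n+1)^n
  | 0 => le_refl 1
  | (n+1) => by
      calc (n+2).factorial = (n+2) * (n+1).factorial := rfl
      _ ≤ (n+2) * (n+1)^n := Nat.mul_le_mul_left _ (aux_fac_le_pow n)
      _ ≤ (n+2) * (n+2)^n :=
        Nat.mul_le_mul_left _ (Nat.pow_le_pow_left (by omega) n)
      _ = (n+2)^(n+1) := (pow_succ' _ _).symm

lemma aux_add_fac (b : ℕ) : ∀ d m : ℕ, b + d ≤ m → (b+d).factorial ≤ b.factorial * m^d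
  | 0, m, _ => by simp
  | (d+1), m, h => by
      have ih := aux_add_fac b d m (by omega)
      calc (b+d+1).factorial = (b+d+1) * (b+d).factorial := rfl
      _ ≤ m * (b.factorial * m^d) := Nat.mul_le_mul (by omega) ih
      _ = b.factorial * m^(d+1) := by ring

/-- If `ab = xy` and `a > x > y ≥ 1`, then `(a!)^b·b! > (x!)^y·y!`. -/
theorem stmt_6 (a b x y : ℕ) (ha : 0 < a) (hb : 0 < b) (hx : 0 < x) (hy : 0 < y)
    (h : a * b = x * y) (h1 : x < a) (h2 : y < x) :
    x.factorial ^ y * y.factorial < a.factorial ^ b * b.factorial := by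
  have hby : b < y := by
    by_contra h'
    push_neg at h'
    have hxy : x * y ≤ x * b := Nat.mul_le_mul_left x h'
    have hab : x * b < a * b := (Nat.mul_lt_mul_right hb).mpr h1
    omega
  set d := y - b with hdef
  have hd : b + d = y := by omega
  have hd1 : 1 ≤ d := by omega
  -- Step 1: y! < b! * x^d
  have key1 : y.factorial < b.factorial * x^d := by
    rw [← hd]
    calc (b+d).factorial ≤ b.factorial * (x-1)^d := aux_add_fac b d (x-1) (by omega)
    _ < b.factorial * x^d := by
        have : (x-1)^d < x^d := Nat.pow_lt_pow_left (by omega) (by omega)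
        exact (Nat.mul_lt_mul_left b.factorial_pos).mpr this
  -- arithmetic fact: (a-x)*b = x*d
  have hsub : (a - x) * b = x * d := by
    have h3 : x * y = x * b + x * d := by rw [← hd, Nat.mul_add]
    have h4 : (a - x) * b = a * b - x * b := Nat.sub_mul a x b
    omega
  -- Step 2: x!^y * x^d ≤ a!^b
  have key2 : x.factorial ^ y * x ^ d ≤ a.factorial ^ b := by
    rw [← Nat.pow_le_pow_iff_left hx.ne']
    have ha1 : x.factorial * (x+1)^(a-x) ≤ a.factorial := by
      have := Nat.factorial_mul_pow_le_factorial (m := x) (n := a - x)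
      rwa [Nat.add_sub_cancel' h1.le] at this
    have hxx : x * x.factorial ≤ (x+1)^x := by
      calc x * x.factorial ≤ (x+1) * x.factorial := Nat.mul_le_mul_right _ (by omega)
      _ = (x+1).factorial := rfl
      _ ≤ (x+1)^x := aux_fac_le_pow x
    have hexp : x * (d * x) = (a-x) * (b * x) := by
      calc x * (d * x) = (x * d) * x := by ring
      _ = ((a-x) * b) * x := by rw [hsub]
      _ = (a-x) * (b * x) := by ring
    calc (x.factorial^y * x^d)^x
        = x.factorial^(b*x) * ((x * x.factorial)^(d*x)) := by
          rw [← hd]; rw [mul_pow, ← pow_mul, ← pow_mul, mul_pow]; ring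
      _ ≤ x.factorial^(b*x) * (((x+1)^x)^(d*x)) :=
          Nat.mul_le_mul_left _ (Nat.pow_le_pow_left hxx _)
      _ = x.factorial^(b*x) * ((x+1)^((a-x)*(b*x))) := by
          rw [← pow_mul, hexp]
      _ = (x.factorial * (x+1)^(a-x))^(b*x) := by
          rw [mul_pow, ← pow_mul]
      _ ≤ a.factorial^(b*x) := Nat.pow_le_pow_left ha1 _
      _ = (a.factorial^b)^x := pow_mul _ _ _
  calc x.factorial ^ y * y.factorial
      < x.factorial ^ y * (b.factorial * x^d) :=
        (Nat.mul_lt_mul_left (pow_pos x.factorial_pos y)).mpr key1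
    _ = (x.factorial ^ y * x^d) * b.factorial := by ring
    _ ≤ a.factorial ^ b * b.factorial := Nat.mul_le_mul_right _ key2
end

section
/- Let a, b, x, y be positive integers with a ≥ 5, b ≥ 2, x ≥ 5, y ≥ 2 such that a^b = x^y and a ≠ x. Then (a!)^b · b! ≠ (x!)^y · y! and (a!)^b · b! ≠ 2·(x!)^y · y!. -/
lemma common_base {A X B Y : ℕ} (hA : A ≠ 0) (hY : Y ≠ 0)
    (hco : Nat.Coprime B Y) (h : A ^ B = X ^ Y) : ∃ c, A = c ^ Y ∧ X = c ^ B := by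
  have key : ∀ p : ℕ, Y ∣ A.factorization p := by
    intro p
    have h2 : B * A.factorization p = Y * X.factorization p := by
      have := congrArg (fun n => n.factorization p) h
      simpa [Nat.factorization_pow] using this
    exact Nat.Coprime.dvd_of_dvd_mul_left hco.symm (h2 ▸ Dvd.intro _ rfl)
  have hcne : Nat.floorRoot Y A ≠ 0 := Nat.floorRoot_ne_zero.2 ⟨hY, hA⟩
  have hc : A = Nat.floorRoot Y A ^ Y := by
    refine Nat.dvd_antisymm ?_ Nat.floorRoot_pow_dvd
    rw [← Nat.factorization_le_iff_dvd hA (pow_ne_zero _ hcne)]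
    intro p
    rw [Nat.factorization_pow, Finsupp.smul_apply, Nat.factorization_floorRoot]
    have h3 : (A.factorization ⌊/⌋ Y) p = A.factorization p / Y := rfl
    rw [h3, smul_eq_mul, Nat.mul_div_cancel' (key p)]
  refine ⟨Nat.floorRoot Y A, hc, ?_⟩
  have h4 : (Nat.floorRoot Y A ^ B) ^ Y = X ^ Y := by
    rw [← pow_mul, mul_comm B Y, pow_mul, ← hc, h]
  exact (Nat.pow_left_injective hY h4).symm

lemma fact_val {p r n : ℕ} (hp : p.Prime) (h : p ^ r ∣ n.factorial) : r * (p - 1) ≤ n := by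
  have h1 : r ≤ ∑ i ∈ Finset.Ico 1 (Nat.log p n + 1), n / p ^ i :=
    (Nat.Prime.pow_dvd_factorial_iff hp (Nat.lt_succ_self _)).1 h
  have h2 := Nat.geom_sum_Ico_le hp.two_le n (Nat.log p n + 1)
  have h3 : r ≤ n / (p - 1) := le_trans h1 h2
  have hp1 : 0 < p - 1 := by have := hp.two_le; omega
  calc r * (p - 1) ≤ n / (p - 1) * (p - 1) := Nat.mul_le_mul_right _ h3
    _ ≤ n := Nat.div_mul_le_self _ _

lemma pow_lt_aux {c t : ℕ} (hc : 2 ≤ c) (ht : 2 ≤ t) (h5 : 5 ≤ c ^ t) : 2 * t + 1 < c ^ t := by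
  rcases Nat.lt_or_ge c 3 with h3 | h3
  · interval_cases c
    have h8 : 3 ≤ t := by
      by_contra hlt
      interval_cases t <;> omega
    clear h5 ht
    induction t with
    | zero => omega
    | succ n ih =>
      rcases Nat.lt_or_ge n 3 with hn | hn
      · interval_cases n <;> simp_all <;> omega
      · have := ih (by omega)
        have : 2 ^ n ≤ 2 ^ (n+1) := Nat.pow_le_pow_right (by omega) (by omega)
        have e : 2 ^ (n+1) = 2 * 2^n := by ring
        omega
  · have key : ∀ s, 2 ≤ s → 2 * s + 1 < 3 ^ s := by
      intro s hs
      induction s with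
      | zero => omega
      | succ n ih =>
        rcases Nat.lt_or_ge n 2 with hn | hn
        · interval_cases n
          · omega
          · norm_num
        · have := ih (by omega)
          have e : 3 ^ (n+1) = 3 * 3^n := by ring
          nlinarith [Nat.one_le_two_pow (n := n)]
    calc 2 * t + 1 < 3 ^ t := key t ht
      _ ≤ c ^ t := Nat.pow_le_pow_left h3 t

lemma key_lemma (a b x y ε : ℕ) (ha : 5 ≤ a) (hb : 2 ≤ b) (hx : 5 ≤ x) (hy : 2 ≤ y)
    (hpow : a ^ b = x ^ y) (hax : a ≠ x) (hε : 1 ≤ ε) (hε2 : ε ≤ 2) :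
    a.factorial ^ b * b.factorial ≠ ε * (x.factorial ^ y * y.factorial) := by
  intro E
  set g := Nat.gcd b y with hg
  have hg0 : 0 < g := Nat.gcd_pos_of_pos_left _ (by omega)
  obtain ⟨b₁, hb₁⟩ : g ∣ b := Nat.gcd_dvd_left b y
  obtain ⟨y₁, hy₁⟩ : g ∣ y := Nat.gcd_dvd_right b y
  have hco : Nat.Coprime b₁ y₁ := by
    have h1 : b₁ = b / g := by rw [hb₁, Nat.mul_div_cancel_left _ hg0]
    have h2 : y₁ = y / g := by rw [hy₁, Nat.mul_div_cancel_left _ hg0]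
    rw [h1, h2]
    exact Nat.coprime_div_gcd_div_gcd hg0
  have hb₁0 : 0 < b₁ := by
    rcases Nat.eq_zero_or_pos b₁ with h | h
    · subst h; simp at hb₁; omega
    · exact h
  have hy₁0 : 0 < y₁ := by
    rcases Nat.eq_zero_or_pos y₁ with h | h
    · subst h; simp at hy₁; omega
    · exact h
  have hroot : a ^ b₁ = x ^ y₁ := by
    apply Nat.pow_left_injective (n := g) (by omega)
    show (a ^ b₁) ^ g = (x ^ y₁) ^ g
    rw [← pow_mul, ← pow_mul, mul_comm b₁ g, mul_comm y₁ g, ← hb₁, ← hy₁, hpow]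
  obtain ⟨c, hac, hxc⟩ := common_base (by omega) (by omega) hco hroot
  have hc2 : 2 ≤ c := by
    by_contra h
    interval_cases c
    · rw [zero_pow (by omega)] at hac; omega
    · rw [one_pow] at hac; omega
  have hne : b₁ ≠ y₁ := by rintro rfl; exact hax (hac.trans hxc.symm)
  rcases Nat.lt_or_ge b₁ y₁ with hlt | hge
  · -- a > x case
    have h2x : 2 * x ≤ a := by
      have hsplit : c ^ b₁ * c ^ (y₁ - b₁) = c ^ y₁ := by
        rw [← pow_add]; congr 1; omega
      have h2 : 2 ≤ c ^ (y₁ - b₁) := le_trans hc2 (Nat.le_self_pow (by omega) c)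
      calc 2 * x = x * 2 := by ring
        _ ≤ c ^ b₁ * c ^ (y₁ - b₁) := Nat.mul_le_mul (le_of_eq hxc) h2
        _ = a := by rw [hsplit, ← hac]
    obtain ⟨p, hp, hpl, hpu⟩ := Nat.exists_prime_lt_and_le_two_mul (a / 2) (by omega)
    have hpa : p ≤ a := le_trans hpu (by omega)
    have hpx : x < p := lt_of_le_of_lt (by omega) hpl
    have hdvd1 : p ^ b ∣ a.factorial ^ b * b.factorial :=
      Dvd.dvd.mul_right (pow_dvd_pow_of_dvd (Nat.dvd_factorial hp.pos hpa) b) _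
    rw [E] at hdvd1
    have hcop : Nat.Coprime (p ^ b) (ε * x.factorial ^ y) := by
      apply Nat.Coprime.pow_left
      apply Nat.Coprime.mul_right
      · rw [Nat.Prime.coprime_iff_not_dvd hp]
        intro hd
        have := Nat.le_of_dvd (by omega) hd
        omega
      · apply Nat.Coprime.pow_right
        rw [Nat.Prime.coprime_iff_not_dvd hp]
        rw [Nat.Prime.dvd_factorial hp]
        omega
    have hdvd2 : p ^ b ∣ y.factorial := by
      apply Nat.Coprime.dvd_of_dvd_mul_left hcop
      rwa [← mul_assoc] at hdvd1
    have hby : b * (p - 1) ≤ y := fact_val hp hdvd2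
    have hp1 : a - 1 ≤ 2 * (p - 1) := by omega
    have hstep : b * (a - 1) ≤ 2 * y := by
      calc b * (a - 1) ≤ b * (2 * (p - 1)) := Nat.mul_le_mul_left b hp1
        _ = 2 * (b * (p - 1)) := by ring
        _ ≤ 2 * y := Nat.mul_le_mul_left 2 hby
    have hcancel : b₁ * (a - 1) ≤ 2 * y₁ := by
      have : g * (b₁ * (a - 1)) ≤ g * (2 * y₁) := by
        calc g * (b₁ * (a - 1)) = (g * b₁) * (a - 1) := by ring
          _ = b * (a - 1) := by rw [← hb₁]
          _ ≤ 2 * y := hstep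
          _ = 2 * (g * y₁) := by rw [hy₁]
          _ = g * (2 * y₁) := by ring
      exact Nat.le_of_mul_le_mul_left this hg0
    have hfin : a - 1 ≤ 2 * y₁ :=
      le_trans (Nat.le_mul_of_pos_left _ hb₁0) hcancel
    have := pow_lt_aux (t := y₁) hc2 (by omega) (by rw [← hac]; omega)
    rw [← hac] at this
    omega
  · -- x > a case
    have hlt : y₁ < b₁ := by omega
    have h2a : 2 * a ≤ x := by
      have hsplit : c ^ y₁ * c ^ (b₁ - y₁) = c ^ b₁ := by
        rw [← pow_add]; congr 1; omega
      have h2 : 2 ≤ c ^ (b₁ - y₁) := le_trans hc2 (Nat.le_self_pow (by omega) c)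
      calc 2 * a = a * 2 := by ring
        _ ≤ c ^ y₁ * c ^ (b₁ - y₁) := Nat.mul_le_mul (le_of_eq hac) h2
        _ = x := by rw [hsplit, ← hxc]
    obtain ⟨p, hp, hpl, hpu⟩ := Nat.exists_prime_lt_and_le_two_mul (x / 2) (by omega)
    have hpx : p ≤ x := le_trans hpu (by omega)
    have hpa : a < p := lt_of_le_of_lt (by omega) hpl
    have hdvd1 : p ^ y ∣ ε * (x.factorial ^ y * y.factorial) := by
      apply Dvd.dvd.mul_left
      exact Dvd.dvd.mul_right (pow_dvd_pow_of_dvd (Nat.dvd_factorial hp.pos hpx) y) _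
    rw [← E] at hdvd1
    have hcop : Nat.Coprime (p ^ y) (a.factorial ^ b) := by
      apply Nat.Coprime.pow_left
      apply Nat.Coprime.pow_right
      rw [Nat.Prime.coprime_iff_not_dvd hp, Nat.Prime.dvd_factorial hp]
      omega
    have hdvd2 : p ^ y ∣ b.factorial := by
      exact Nat.Coprime.dvd_of_dvd_mul_left hcop hdvd1
    have hyb : y * (p - 1) ≤ b := fact_val hp hdvd2
    have hp1 : x - 1 ≤ 2 * (p - 1) := by omega
    have hstep : y * (x - 1) ≤ 2 * b := by
      calc y * (x - 1) ≤ y * (2 * (p - 1)) := Nat.mul_le_mul_left y hp1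
        _ = 2 * (y * (p - 1)) := by ring
        _ ≤ 2 * b := Nat.mul_le_mul_left 2 hyb
    have hcancel : y₁ * (x - 1) ≤ 2 * b₁ := by
      have : g * (y₁ * (x - 1)) ≤ g * (2 * b₁) := by
        calc g * (y₁ * (x - 1)) = (g * y₁) * (x - 1) := by ring
          _ = y * (x - 1) := by rw [← hy₁]
          _ ≤ 2 * b := hstep
          _ = 2 * (g * b₁) := by rw [hb₁]
          _ = g * (2 * b₁) := by ring
      exact Nat.le_of_mul_le_mul_left this hg0
    have hfin : x - 1 ≤ 2 * b₁ :=
      le_trans (Nat.le_mul_of_pos_left _ hy₁0) hcancel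
    have := pow_lt_aux (t := b₁) hc2 (by omega) (by rw [← hxc]; omega)
    rw [← hxc] at this
    omega

/-- If `a, x ≥ 5`, `b, y ≥ 2`, `a^b = x^y` and `a ≠ x`, then
`(a!)^b·b! ≠ (x!)^y·y!` and `(a!)^b·b! ≠ 2·(x!)^y·y!`. -/
theorem stmt_8 (a b x y : ℕ) (ha : 5 ≤ a) (hb : 2 ≤ b) (hx : 5 ≤ x) (hy : 2 ≤ y)
    (hpow : a ^ b = x ^ y) (hax : a ≠ x) :
    a.factorial ^ b * b.factorial ≠ x.factorial ^ y * y.factorial ∧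
      a.factorial ^ b * b.factorial ≠ 2 * (x.factorial ^ y * y.factorial) := by
  constructor
  · have h := key_lemma a b x y 1 ha hb hx hy hpow hax (le_refl 1) (by norm_num)
    rwa [one_mul] at h
  · exact key_lemma a b x y 2 ha hb hx hy hpow hax (by norm_num) (le_refl 2)
end

section
/- Let q be an integer, r a prime not dividing q, and k the multiplicative order of q modulo r. Then r divides Φ_m(q) if and only if m = k·r^i for some integer i ≥ 0, where Φ_m is the m-th cyclotomic polynomial. -/
/-- Let `q` be an integer, `r` a prime not dividing `q`, and `k` the multiplicative
order of `q` modulo `r`. Then `r ∣ Φ_m(q)` if and only if `m = k·r^i` for some `i ≥ 0`. -/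
theorem stmt_10 (q : ℤ) (r : ℕ) (hr : r.Prime) (hrq : ¬ (r : ℤ) ∣ q)
    (k : ℕ) (hk : k = orderOf (q : ZMod r)) (m : ℕ) (hm : 0 < m) :
    (r : ℤ) ∣ (Polynomial.cyclotomic m ℤ).eval q ↔ ∃ i : ℕ, m = k * r ^ i := by
  haveI : Fact r.Prime := ⟨hr⟩
  have hqne : (q : ZMod r) ≠ 0 := by
    rwa [Ne, ZMod.intCast_zmod_eq_zero_iff_dvd]
  have hqu : IsUnit (q : ZMod r) := isUnit_iff_ne_zero.mpr hqne
  obtain ⟨u, hu⟩ := hqu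
  have hku : k = orderOf u := by rw [hk, ← hu, orderOf_units]
  have hkdvd : k ∣ r - 1 := by
    rw [hku, ← Nat.totient_prime hr, ← ZMod.card_units_eq_totient]
    exact orderOf_dvd_card
  have hk0 : 0 < k := Nat.pos_of_dvd_of_pos hkdvd (by have := hr.two_le; omega)
  have hrk : ¬ r ∣ k := by
    intro h
    have h2r := hr.two_le
    have := Nat.le_of_dvd (by omega) (h.trans hkdvd)
    have := hr.two_le
    omega
  -- reduce to root of cyclotomic over ZMod r
  have key : (r : ℤ) ∣ (Polynomial.cyclotomic m ℤ).eval q ↔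
      (Polynomial.cyclotomic m (ZMod r)).IsRoot (q : ZMod r) := by
    rw [← ZMod.intCast_zmod_eq_zero_iff_dvd, Polynomial.IsRoot,
      ← Polynomial.map_cyclotomic_int m (ZMod r), Polynomial.eval_map,
      Polynomial.eval₂_at_intCast]
    simp
  rw [key]
  -- decompose m = r^i * m'
  obtain ⟨i, m', hrm', hmeq⟩ : ∃ i m', ¬ r ∣ m' ∧ m = r ^ i * m' :=
    ⟨m.factorization r, m / r ^ m.factorization r, Nat.not_dvd_ordCompl hr hm.ne',
      (Nat.ordProj_mul_ordCompl_eq_self m r).symm⟩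
  have hm'pos : 0 < m' := by
    rcases Nat.eq_zero_or_pos m' with h | h
    · simp [h, hmeq] at hm
    · exact h
  haveI : NeZero (m' : ZMod r) :=
    ⟨fun h => hrm' ((ZMod.natCast_eq_zero_iff m' r).mp h)⟩
  rw [hmeq, Polynomial.isRoot_cyclotomic_prime_pow_mul_iff_of_charP]
  constructor
  · intro h
    exact ⟨i, by rw [h.eq_orderOf, ← hk, mul_comm]⟩
  · rintro ⟨j, hj⟩
    have hm'k : m' = k := by
      have h1 : m' ∣ k * r ^ j := ⟨r ^ i, by rw [← hj]; ring⟩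
      have h2 : k ∣ r ^ i * m' := ⟨r ^ j, hj⟩
      have c1 : m'.Coprime (r ^ j) :=
        Nat.Coprime.pow_right j (hr.coprime_iff_not_dvd.mpr hrm').symm
      have c2 : k.Coprime (r ^ i) := Nat.Coprime.pow_right i (hr.coprime_iff_not_dvd.mpr hrk).symm
      exact Nat.dvd_antisymm ((Nat.Coprime.dvd_of_dvd_mul_right c1 h1))
        ((Nat.Coprime.dvd_of_dvd_mul_left c2 h2))
    rw [hm'k, hk]
    exact IsPrimitiveRoot.orderOf _
end

section
/- For every positive integer x, √(2πx)·(x/e)^x < x! < √(2πx)·(x/e)^x · e^(1/(12x)). -/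
open Real Filter Stirling

/-- Sharp strict bound on the log-difference of Stirling's sequence. -/
lemma stirling_diff_lt (n : ℕ) :
    Real.log (stirlingSeq (n + 1)) - Real.log (stirlingSeq (n + 2)) <
      1 / (12 * (n + 1 : ℝ)) - 1 / (12 * (n + 2 : ℝ)) := by
  set t : ℝ := ((1 : ℝ) / (2 * ((n : ℝ) + 1) + 1)) ^ 2 with ht
  have htpos : 0 < t := by positivity
  have htlt : t < 1 := by
    rw [ht, one_div, inv_pow]
    exact inv_lt_one_of_one_lt₀ (one_lt_pow₀ (by nlinarith [Nat.cast_nonneg (α := ℝ) n]) two_ne_zero)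
  have hf := log_stirlingSeq_diff_hasSum n
  -- the comparison series : (1/3) * t^(k+1)
  have hg : HasSum (fun k : ℕ => (1 / 3 : ℝ) * t ^ (k + 1)) ((1 / 3) * (t / (1 - t))) := by
    have := (hasSum_geometric_of_lt_one htpos.le htlt).mul_left ((1 / 3 : ℝ) * t)
    have e1 : (fun k : ℕ => (1 / 3 : ℝ) * t ^ (k + 1)) = fun i : ℕ => 1 / 3 * t * t ^ i := by
      funext k; rw [pow_succ']; ring
    have e2 : (1 / 3 : ℝ) * (t / (1 - t)) = 1 / 3 * t * (1 - t)⁻¹ := by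
      rw [div_eq_mul_inv]; ring
    rw [e1, e2]; exact this
  have hsum_eq : (1 / 3 : ℝ) * (t / (1 - t)) = 1 / (12 * (n + 1 : ℝ)) - 1 / (12 * (n + 2 : ℝ)) := by
    rw [ht]
    have h2 : (2 * ((n : ℝ) + 1) + 1) ≠ 0 := by positivity
    have key : (1 - (1 / (2 * ((n:ℝ) + 1) + 1)) ^ 2)
        = (4 * ((n:ℝ) + 1) * ((n:ℝ) + 2)) / (2 * ((n:ℝ) + 1) + 1) ^ 2 := by
      field_simp
      ring
    rw [key, div_pow, one_pow, div_div_div_cancel_right₀]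
    rw [div_sub_div _ _ (by positivity) (by positivity), div_mul_div_comm]
    rw [div_eq_div_iff (by positivity) (by positivity)]
    ring
    positivity
  rw [← hsum_eq]
  -- strict comparison: f k ≤ g k, strict at k = 1
  have hle : ∀ k : ℕ, (1 : ℝ) / (2 * ↑(k + 1) + 1) * t ^ (k + 1) ≤ (1 / 3 : ℝ) * t ^ (k + 1) := by
    intro k
    apply mul_le_mul_of_nonneg_right _ (by positivity)
    rw [div_le_div_iff₀ (by positivity) (by norm_num)]
    push_cast; nlinarith [Nat.cast_nonneg (α := ℝ) k]
  have hlt : (1 : ℝ) / (2 * ((1 + 1 : ℕ) : ℝ) + 1) * t ^ (1 + 1) < (1 / 3 : ℝ) * t ^ (1 + 1) := by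
    apply mul_lt_mul_of_pos_right _ (by positivity)
    norm_num
  have h1 := hf.tsum_eq
  have h2 := hg.tsum_eq
  calc Real.log (stirlingSeq (n + 1)) - Real.log (stirlingSeq (n + 2))
      = ∑' k : ℕ, (1 : ℝ) / (2 * ↑(k + 1) + 1) * t ^ (k + 1) := by
        rw [← h1]; norm_num [ht]
    _ < ∑' k : ℕ, (1 / 3 : ℝ) * t ^ (k + 1) := by
        exact Summable.tsum_lt_tsum_of_nonneg (i := 1) (fun b => by positivity) hle hlt hg.summable
    _ = (1 / 3 : ℝ) * (t / (1 - t)) := h2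

/-- Stirling's sequence is strictly above its limit `√π`. -/
lemma sqrtPi_le_stirlingSeq (n : ℕ) : Real.sqrt π ≤ stirlingSeq (n + 1) := by
  refine le_of_tendsto tendsto_stirlingSeq_sqrt_pi ?_
  filter_upwards [eventually_ge_atTop (n + 1)] with m hm
  obtain ⟨k, rfl⟩ := Nat.exists_eq_add_of_le hm
  have := stirlingSeq'_antitone (Nat.le_add_right n k)
  simpa [Function.comp, Nat.succ_eq_add_one, Nat.add_right_comm] using this

lemma stirlingSeq_lt (n : ℕ) : stirlingSeq (n + 2) < stirlingSeq (n + 1) := by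
  have hf := log_stirlingSeq_diff_hasSum n
  have hpos : 0 < Real.log (stirlingSeq (n + 1)) - Real.log (stirlingSeq (n + 2)) := by
    refine lt_of_lt_of_le ?_ (le_hasSum hf 0 fun k _ => by positivity)
    positivity
  have := sub_pos.mp hpos
  exact (Real.log_lt_log_iff (stirlingSeq'_pos (n + 1)) (stirlingSeq'_pos n)).mp this

/-- Upper bound: `log (stirlingSeq (n+1)) ≤ log √π + 1/(12(n+1))`. -/
lemma log_stirlingSeq_le (n : ℕ) :
    Real.log (stirlingSeq (n + 1)) ≤ Real.log (Real.sqrt π) + 1 / (12 * ((n : ℝ) + 1)) := by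
  set h : ℕ → ℝ := fun m => Real.log (stirlingSeq (m + 1)) - 1 / (12 * ((m : ℝ) + 1)) with hh
  have hmono : Monotone h := by
    apply monotone_nat_of_le_succ
    intro m
    have := stirling_diff_lt m
    simp only [hh]
    rw [show m + 1 + 1 = m + 2 from rfl]
    push_cast
    rw [show (m : ℝ) + 1 + 1 = (m : ℝ) + 2 by ring]
    linarith [this]
  have htend : Tendsto h atTop (nhds (Real.log (Real.sqrt π))) := by
    have h1 : Tendsto (fun m : ℕ => Real.log (stirlingSeq (m + 1))) atTop
        (nhds (Real.log (Real.sqrt π))) := by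
      have hpos : (0 : ℝ) < Real.sqrt π := Real.sqrt_pos.mpr Real.pi_pos
      exact ((Real.continuousAt_log hpos.ne').tendsto.comp
        (tendsto_stirlingSeq_sqrt_pi.comp (tendsto_add_atTop_nat 1)))
    have h2 : Tendsto (fun m : ℕ => 1 / (12 * ((m : ℝ) + 1))) atTop (nhds 0) := by
      have h0 := Filter.Tendsto.const_mul (1 / 12 : ℝ) tendsto_one_div_add_atTop_nhds_zero_nat
      rw [mul_zero] at h0
      exact h0.congr fun m => by rw [div_mul_div_comm, one_mul]
    have h3 := h1.sub h2
    rw [sub_zero] at h3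
    exact h3
  have := hmono.ge_of_tendsto htend n
  simp only [hh] at this
  linarith

lemma log_stirlingSeq_lt (n : ℕ) :
    Real.log (stirlingSeq (n + 1)) < Real.log (Real.sqrt π) + 1 / (12 * ((n : ℝ) + 1)) := by
  have h1 := stirling_diff_lt n
  have h2 := log_stirlingSeq_le (n + 1)
  rw [show n + 1 + 1 = n + 2 from rfl] at h2
  push_cast at h2 ⊢
  rw [show (n : ℝ) + 1 + 1 = (n : ℝ) + 2 by ring] at h2
  linarith

/-- Stirling's formula with explicit bounds (Robbins):
`√(2πx)·(x/e)^x < x! < √(2πx)·(x/e)^x·e^(1/(12x))` for every positive integer `x`. -/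
theorem stmt_11 (x : ℕ) (hx : 0 < x) :
    Real.sqrt (2 * Real.pi * x) * ((x : ℝ) / Real.exp 1) ^ x < x.factorial ∧
      (x.factorial : ℝ) <
        Real.sqrt (2 * Real.pi * x) * ((x : ℝ) / Real.exp 1) ^ x
          * Real.exp (1 / (12 * x)) := by
  obtain ⟨n, rfl⟩ := Nat.exists_eq_add_of_lt hx
  rw [zero_add] at *
  set m := n + 1 with hm
  have hmpos : (0 : ℝ) < m := by positivity
  have hbase : (0 : ℝ) < Real.sqrt (2 * (m : ℝ)) * ((m : ℝ) / Real.exp 1) ^ m := by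
    positivity
  have hfact : (m.factorial : ℝ) = stirlingSeq m * (Real.sqrt (2 * m) * ((m : ℝ) / Real.exp 1) ^ m) := by
    rw [stirlingSeq]
    field_simp
  have hsplit : Real.sqrt (2 * π * m) = Real.sqrt π * Real.sqrt (2 * m) := by
    rw [← Real.sqrt_mul Real.pi_pos.le]
    ring_nf
  constructor
  · rw [hfact, hsplit]
    have h1 : Real.sqrt π < stirlingSeq m :=
      (sqrtPi_le_stirlingSeq m).trans_lt (by simpa [hm] using stirlingSeq_lt n)
    calc Real.sqrt π * Real.sqrt (2 * ↑m) * (↑m / Real.exp 1) ^ m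
        = Real.sqrt π * (Real.sqrt (2 * ↑m) * (↑m / Real.exp 1) ^ m) := by ring
      _ < stirlingSeq m * (Real.sqrt (2 * ↑m) * (↑m / Real.exp 1) ^ m) :=
          mul_lt_mul_of_pos_right h1 hbase
  · rw [hfact, hsplit]
    have h1 : stirlingSeq m < Real.sqrt π * Real.exp (1 / (12 * m)) := by
      have hlog := log_stirlingSeq_lt n
      have hspos : 0 < stirlingSeq m := by simpa [hm] using stirlingSeq'_pos n
      have hπpos : (0 : ℝ) < Real.sqrt π := Real.sqrt_pos.mpr Real.pi_pos
      have : Real.log (stirlingSeq m) <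
          Real.log (Real.sqrt π * Real.exp (1 / (12 * m))) := by
        rw [Real.log_mul hπpos.ne' (Real.exp_ne_zero _), Real.log_exp]
        convert hlog using 3
        push_cast [hm]; ring
      exact (Real.log_lt_log_iff hspos (by positivity)).mp this
    calc stirlingSeq m * (Real.sqrt (2 * ↑m) * (↑m / Real.exp 1) ^ m)
        < Real.sqrt π * Real.exp (1 / (12 * m)) *
            (Real.sqrt (2 * ↑m) * (↑m / Real.exp 1) ^ m) :=
          mul_lt_mul_of_pos_right h1 hbase
      _ = Real.sqrt π * Real.sqrt (2 * ↑m) * (↑m / Real.exp 1) ^ m * Real.exp (1 / (12 * ↑m)) := by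
          ring
end

section
/- For every positive integer x, the central binomial coefficient C(2x, x) satisfies C(2x, x) < 2^(2x)/√(2x). -/
lemma aux_centralBinom_sq (n : ℕ) :
    (3 * n + 1) * Nat.centralBinom n ^ 2 ≤ 16 ^ n := by
  induction n with
  | zero => simp [Nat.centralBinom]
  | succ n ih =>
    have key : (n + 1) * Nat.centralBinom (n + 1) = 2 * (2 * n + 1) * Nat.centralBinom n :=
      Nat.succ_mul_centralBinom_succ n
    have hsq : (n + 1) ^ 2 * Nat.centralBinom (n + 1) ^ 2
        = 4 * (2 * n + 1) ^ 2 * Nat.centralBinom n ^ 2 := by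
      have := congrArg (· ^ 2) key
      ring_nf at this ⊢
      linarith [this]
    have hcoef : (3 * (n + 1) + 1) * (4 * (2 * n + 1) ^ 2) ≤ 16 * ((n + 1) ^ 2 * (3 * n + 1)) := by
      nlinarith [sq_nonneg n]
    have : (n + 1) ^ 2 * ((3 * (n + 1) + 1) * Nat.centralBinom (n + 1) ^ 2)
        ≤ (n + 1) ^ 2 * 16 ^ (n + 1) := by
      calc (n + 1) ^ 2 * ((3 * (n + 1) + 1) * Nat.centralBinom (n + 1) ^ 2)
          = (3 * (n + 1) + 1) * ((n + 1) ^ 2 * Nat.centralBinom (n + 1) ^ 2) := by ring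
        _ = (3 * (n + 1) + 1) * (4 * (2 * n + 1) ^ 2) * Nat.centralBinom n ^ 2 := by
            rw [hsq]; ring
        _ ≤ 16 * ((n + 1) ^ 2 * (3 * n + 1)) * Nat.centralBinom n ^ 2 :=
            Nat.mul_le_mul_right _ hcoef
        _ = (n + 1) ^ 2 * (16 * ((3 * n + 1) * Nat.centralBinom n ^ 2)) := by ring
        _ ≤ (n + 1) ^ 2 * (16 * 16 ^ n) :=
            Nat.mul_le_mul_left _ (Nat.mul_le_mul_left _ ih)
        _ = (n + 1) ^ 2 * 16 ^ (n + 1) := by ring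
    exact Nat.le_of_mul_le_mul_left this (by positivity)

/-- For every positive integer `x`, the central binomial coefficient satisfies
`C(2x, x) < 2^(2x)/√(2x)`. -/
theorem stmt_12 (x : ℕ) (hx : 0 < x) :
    ((2 * x).choose x : ℝ) < 2 ^ (2 * x) / Real.sqrt (2 * x) := by
  have hnat : 2 * x * Nat.centralBinom x ^ 2 < 16 ^ x := by
    have h1 := aux_centralBinom_sq x
    have h2 : 2 * x * Nat.centralBinom x ^ 2 < (3 * x + 1) * Nat.centralBinom x ^ 2 := by
      have hc : 0 < Nat.centralBinom x ^ 2 :=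
        pow_pos (Nat.centralBinom_pos x) 2
      exact (Nat.mul_lt_mul_right hc).mpr (by omega)
    omega
  have hreal : (2 * x : ℝ) * (Nat.centralBinom x : ℝ) ^ 2 < 16 ^ x := by
    exact_mod_cast hnat
  have hx' : (0 : ℝ) < 2 * x := by positivity
  rw [lt_div_iff₀ (Real.sqrt_pos.mpr hx')]
  have hCB : ((2 * x).choose x : ℝ) = (Nat.centralBinom x : ℝ) := by
    rw [Nat.centralBinom_eq_two_mul_choose]
  rw [hCB]
  have hL : (0 : ℝ) ≤ (Nat.centralBinom x : ℝ) * Real.sqrt (2 * x) := by positivity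
  have hsq : ((Nat.centralBinom x : ℝ) * Real.sqrt (2 * x)) ^ 2 < ((2 : ℝ) ^ (2 * x)) ^ 2 := by
    rw [mul_pow, Real.sq_sqrt hx'.le]
    calc (Nat.centralBinom x : ℝ) ^ 2 * (2 * x) = 2 * x * (Nat.centralBinom x : ℝ) ^ 2 := by ring
      _ < 16 ^ x := hreal
      _ = ((2 : ℝ) ^ (2 * x)) ^ 2 := by
          rw [← pow_mul, show (16:ℝ) = 2 ^ 4 by norm_num, ← pow_mul]; ring_nf
  exact lt_of_pow_lt_pow_left₀ 2 (by positivity) hsq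
end

section
/- Let G be a finite group, L and R subgroups of G, and D a union of double cosets of the form R g L in G. Define the bipartite bi-coset graph B(G, L, R, D) with vertex parts the right coset spaces [G:L] and [G:R], and edges {Lg, Rdg} for g ∈ G and d ∈ D. Then B(G, L, R, D) is regular (all vertices have the same degree) if and only if |L| = |R|. -/
open QuotientGroup

/-- The bi-coset graph `B(G, L, R, D)`: vertex set is the disjoint union of the sets of
right cosets `[G:L]` and `[G:R]`, with `La` adjacent to `Rb` iff `b·a⁻¹ ∈ D`. -/
def biCosetGraph (G : Type*) [Group G] (L R : Subgroup G) (D : Set G) :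
    SimpleGraph (Quotient (rightRel L) ⊕ Quotient (rightRel R)) where
  Adj u v := ∃ a b : G, b * a⁻¹ ∈ D ∧
    ((u = Sum.inl (Quotient.mk (rightRel L) a) ∧ v = Sum.inr (Quotient.mk (rightRel R) b)) ∨
     (v = Sum.inl (Quotient.mk (rightRel L) a) ∧ u = Sum.inr (Quotient.mk (rightRel R) b)))
  symm := by
    constructor
    rintro u v ⟨a, b, hab, h⟩
    exact ⟨a, b, hab, h.symm⟩
  loopless := by
    constructor
    rintro u ⟨a, b, hab, ⟨h1, h2⟩ | ⟨h1, h2⟩⟩ <;> rw [h1] at h2 <;> simp at h2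

/-- A left-`R`-stable set is in bijection with (its image in the right-coset space) × `R`. -/
noncomputable def stableEquiv {G : Type*} [Group G] (R : Subgroup G) (T : Set G)
    (hT : ∀ r ∈ (R : Set G), ∀ t ∈ T, r * t ∈ T) :
    T ≃ ((Quotient.mk (rightRel R) '' T : Set (Quotient (rightRel R))) × R) where
  toFun x := ⟨⟨Quotient.mk (rightRel R) x, ⟨x, x.2, rfl⟩⟩,
    ⟨(x : G) * (Quotient.out (Quotient.mk (rightRel R) (x : G)))⁻¹, by
      have h : Quotient.mk (rightRel R) (Quotient.out (Quotient.mk (rightRel R) (x : G)))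
          = Quotient.mk (rightRel R) (x : G) := Quotient.out_eq _
      have := Quotient.exact h
      exact rightRel_apply.mp this⟩⟩
  invFun p := ⟨(p.2 : G) * Quotient.out (p.1 : Quotient (rightRel R)), by
    obtain ⟨t, ht, hq⟩ := p.1.2
    have h : Quotient.mk (rightRel R) t = Quotient.mk (rightRel R)
        (Quotient.out (p.1 : Quotient (rightRel R))) := by
      rw [hq, Quotient.out_eq]
    have hr : Quotient.out (p.1 : Quotient (rightRel R)) * t⁻¹ ∈ R :=
      rightRel_apply.mp (Quotient.exact h)
    have hout : Quotient.out (p.1 : Quotient (rightRel R)) ∈ T := by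
      have := hT _ hr t ht
      simpa [mul_assoc] using this
    exact hT _ p.2.2 _ hout⟩
  left_inv x := by
    ext
    simp [mul_assoc]
  right_inv p := by
    obtain ⟨⟨q, hq⟩, r⟩ := p
    have hmk : Quotient.mk (rightRel R) ((r : G) * Quotient.out q) = q := by
      conv_rhs => rw [← Quotient.out_eq q]
      exact Quotient.sound (rightRel_apply.mpr (by simpa [mul_assoc] using r.2))
    ext
    · exact hmk
    · show (r : G) * Quotient.out q *
        (Quotient.out (Quotient.mk (rightRel R) ((r : G) * Quotient.out q)))⁻¹ = r
      rw [hmk]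
      group

theorem card_stable (G : Type*) [Group G] [Finite G] (R : Subgroup G) (T : Set G)
    (hT : ∀ r ∈ (R : Set G), ∀ t ∈ T, r * t ∈ T) :
    Nat.card ((Quotient.mk (rightRel R)) '' T) * Nat.card R = Nat.card T := by
  rw [Nat.card_congr (stableEquiv R T hT), Nat.card_prod]

theorem neighbor_inl (G : Type*) [Group G] (L R : Subgroup G) (D : Set G)
    (hD : ∀ r ∈ (R : Set G), ∀ d ∈ D, ∀ l ∈ (L : Set G), r * d * l ∈ D) (a : G) :
    (biCosetGraph G L R D).neighborSet (Sum.inl (Quotient.mk (rightRel L) a)) =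
      Sum.inr '' ((Quotient.mk (rightRel R)) '' {b : G | b * a⁻¹ ∈ D}) := by
  ext v
  simp only [SimpleGraph.mem_neighborSet, biCosetGraph, Set.mem_image, Set.mem_setOf_eq]
  constructor
  · rintro ⟨a', b', hab, ⟨h1, h2⟩ | ⟨h1, h2⟩⟩
    · have hq : Quotient.mk (rightRel L) a = Quotient.mk (rightRel L) a' :=
        Sum.inl.inj h1
      have hl : a' * a⁻¹ ∈ L := rightRel_apply.mp (Quotient.exact hq)
      have : b' * a⁻¹ ∈ D := by
        have := hD 1 R.one_mem _ hab _ hl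
        simpa [mul_assoc] using this
      exact ⟨_, ⟨b', this, rfl⟩, h2.symm⟩
    · exact absurd h2 (by simp)
  · rintro ⟨q, ⟨b, hb, rfl⟩, rfl⟩
    exact ⟨a, b, hb, Or.inl ⟨rfl, rfl⟩⟩

theorem neighbor_inr (G : Type*) [Group G] (L R : Subgroup G) (D : Set G)
    (hD : ∀ r ∈ (R : Set G), ∀ d ∈ D, ∀ l ∈ (L : Set G), r * d * l ∈ D) (b : G) :
    (biCosetGraph G L R D).neighborSet (Sum.inr (Quotient.mk (rightRel R) b)) =
      Sum.inl '' ((Quotient.mk (rightRel L)) '' {x : G | b * x⁻¹ ∈ D}) := by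
  ext v
  simp only [SimpleGraph.mem_neighborSet, biCosetGraph, Set.mem_image, Set.mem_setOf_eq]
  constructor
  · rintro ⟨a', b', hab, ⟨h1, h2⟩ | ⟨h1, h2⟩⟩
    · exact absurd h1 (by simp)
    · have hq : Quotient.mk (rightRel R) b = Quotient.mk (rightRel R) b' :=
        Sum.inr.inj h2
      have hr : b' * b⁻¹ ∈ R := rightRel_apply.mp (Quotient.exact hq)
      have hr' : b * b'⁻¹ ∈ R := by simpa using R.inv_mem hr
      have : b * a'⁻¹ ∈ D := by
        have := hD _ hr' _ hab 1 L.one_mem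
        simpa [mul_assoc] using this
      exact ⟨_, ⟨a', this, rfl⟩, h1.symm⟩
  · rintro ⟨q, ⟨a, ha, rfl⟩, rfl⟩
    exact ⟨a, b, ha, Or.inr ⟨rfl, rfl⟩⟩

/-- If `D` is a nonempty union of `(R,L)`-double cosets in the finite group `G`,
then the bi-coset graph `B(G, L, R, D)` is regular (all vertices have the same number
of neighbors) if and only if `|L| = |R|`. -/
theorem stmt_13 (G : Type*) [Group G] [Finite G] (L R : Subgroup G) (D : Set G)
    (hD : ∀ r ∈ (R : Set G), ∀ d ∈ D, ∀ l ∈ (L : Set G), r * d * l ∈ D)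
    (hne : D.Nonempty) :
    (∀ u v, Nat.card ((biCosetGraph G L R D).neighborSet u) =
        Nat.card ((biCosetGraph G L R D).neighborSet v)) ↔
      Nat.card L = Nat.card R := by
  haveI := hne.to_subtype
  have hDpos : 0 < Nat.card D := Nat.card_pos
  have hLpos : 0 < Nat.card L := Nat.card_pos
  have hRpos : 0 < Nat.card R := Nat.card_pos
  -- key counting identities
  have keyL : ∀ a : G,
      Nat.card ((biCosetGraph G L R D).neighborSet (Sum.inl (Quotient.mk (rightRel L) a))) *
        Nat.card R = Nat.card D := by
    intro a
    rw [neighbor_inl G L R D hD a,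
      Nat.card_image_of_injective Sum.inr_injective]
    have hstable : ∀ r ∈ (R : Set G), ∀ t ∈ {b : G | b * a⁻¹ ∈ D}, r * t ∈ {b : G | b * a⁻¹ ∈ D} := by
      intro r hr t ht
      have := hD r hr _ ht 1 L.one_mem
      simpa [mul_assoc] using this
    rw [card_stable G R _ hstable]
    exact Nat.card_congr ((Equiv.mulRight a⁻¹).subtypeEquiv (fun x => Iff.rfl))
  have keyR : ∀ b : G,
      Nat.card ((biCosetGraph G L R D).neighborSet (Sum.inr (Quotient.mk (rightRel R) b))) *
        Nat.card L = Nat.card D := by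
    intro b
    rw [neighbor_inr G L R D hD b,
      Nat.card_image_of_injective Sum.inl_injective]
    have hstable : ∀ l ∈ (L : Set G), ∀ t ∈ {x : G | b * x⁻¹ ∈ D}, l * t ∈ {x : G | b * x⁻¹ ∈ D} := by
      intro l hl t ht
      show b * (l * t)⁻¹ ∈ D
      have := hD 1 R.one_mem _ ht _ (L.inv_mem hl)
      simpa [mul_assoc, mul_inv_rev] using this
    rw [card_stable G L _ hstable]
    exact Nat.card_congr (((Equiv.inv G).trans (Equiv.mulLeft b)).subtypeEquiv
      (fun x => Iff.rfl))
  constructor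
  · intro h
    have h1 := keyL 1
    have h2 := keyR 1
    have heq := h (Sum.inl (Quotient.mk (rightRel L) 1)) (Sum.inr (Quotient.mk (rightRel R) 1))
    rw [heq] at h1
    set n := Nat.card ((biCosetGraph G L R D).neighborSet (Sum.inr (Quotient.mk (rightRel R) 1)))
    have hn : n ≠ 0 := by
      intro hn0
      rw [hn0, zero_mul] at h2
      omega
    have : n * Nat.card R = n * Nat.card L := by rw [h1, h2]
    exact (Nat.eq_of_mul_eq_mul_left (Nat.pos_of_ne_zero hn) this).symm
  · intro hLR u v
    have key : ∀ u, Nat.card ((biCosetGraph G L R D).neighborSet u) * Nat.card R =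
        Nat.card D := by
      rintro (q | q)
      · rw [← Quotient.out_eq q]; exact keyL q.out
      · rw [← Quotient.out_eq q, hLR.symm]; exact keyR q.out
    have := (key u).trans (key v).symm
    exact Nat.eq_of_mul_eq_mul_right hRpos this
end
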